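/- arXiv:2204.02668 — 2 statements merged into one kernel-verified Lean document; each statement's English description precedes it below -/
import Mathlib

section
/- Let G = (V, E) be a finite graph and let τ ≥ k ≥ 1. Consider the temporal graph G with τ identical layers all equal to E. Then G admits a k-activity timeline consisting only of length-0 intervals covering it if and only if G admits a (τ : τ−k)-coloring, i.e., a function c : V → {S ⊆ [τ] : |S| = τ−k} with c(u) ∩ c(v) = ∅ for every edge {u,v} ∈ E. -/
def covers {V : Type*} {τ : ℕ} (E : Fin τ → SimpleGraph V)
    (T : Finset (V × Fin τ × Fin τ)) : Prop :=
  ∀ (t : Fin τ) (u v : V), (E t).Adj u v →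
    ∃ x ∈ T, (x.1 = u ∨ x.1 = v) ∧ x.2.1 ≤ t ∧ t ≤ x.2.2

def isTimeline {V : Type*} [DecidableEq V] {τ : ℕ} (k : ℕ)
    (T : Finset (V × Fin τ × Fin τ)) : Prop :=
  (∀ x ∈ T, x.2.1 ≤ x.2.2) ∧
  ∀ v : V, (T.filter (fun x => x.1 = v)).card ≤ k

/-!
A timeline made of length-0 intervals is just a choice, for every vertex `v`, of a set `A v`
of at most `k` active time steps, and it covers the static temporal graph exactly when every
edge has an active endpoint at every step, i.e. `A u ∪ A v = [τ]`. Passing to complements,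
this says that the inactive sets `(A v)ᶜ`, of size at least `τ - k`, are disjoint along edges;
shrinking them to size exactly `τ - k` gives a `(τ : τ - k)`-coloring, and conversely the
complements of the colors of such a coloring are activity sets.
-/

open Finset

section PointTimeline

variable {V : Type*} {τ : ℕ}

def activeTimes [DecidableEq V] (T : Finset (V × Fin τ × Fin τ)) (v : V) : Finset (Fin τ) :=
  univ.filter fun t => (v, t, t) ∈ T

lemma card_activeTimes_le [DecidableEq V] {k : ℕ} {T : Finset (V × Fin τ × Fin τ)}
    (hT : isTimeline k T) (v : V) : #(activeTimes T v) ≤ k := by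
  refine (card_le_card_of_injOn (fun t => (v, t, t)) ?_ ?_).trans (hT.2 v)
  · intro t ht
    simp_all [activeTimes]
  · intro s _ t _ hst
    simpa using hst

lemma union_activeTimes_eq_univ [DecidableEq V] {G : SimpleGraph V}
    {T : Finset (V × Fin τ × Fin τ)} (hpoint : ∀ x ∈ T, x.2.1 = x.2.2)
    (hcov : covers (fun _ => G) T) {u v : V} (huv : G.Adj u v) :
    activeTimes T u ∪ activeTimes T v = univ := by
  refine eq_univ_of_forall fun t => ?_
  obtain ⟨⟨w, a, b⟩, hxT, hw, hat, htb⟩ := hcov t u v huv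
  have hab : a = b := hpoint _ hxT
  subst hab
  obtain rfl : a = t := le_antisymm hat htb
  rcases hw with rfl | rfl <;> simp [activeTimes, hxT]

variable [Fintype V]

def pointTimeline (A : V → Finset (Fin τ)) : Finset (V × Fin τ × Fin τ) :=
  univ.filter fun x => x.2.1 = x.2.2 ∧ x.2.1 ∈ A x.1

lemma pointTimeline_isPoint (A : V → Finset (Fin τ)) :
    ∀ x ∈ pointTimeline A, x.2.1 = x.2.2 :=
  fun _ hx => (mem_filter.1 hx).2.1

lemma isTimeline_pointTimeline [DecidableEq V] {k : ℕ} {A : V → Finset (Fin τ)}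
    (hA : ∀ v, #(A v) ≤ k) : isTimeline k (pointTimeline A) := by
  refine ⟨fun x hx => (pointTimeline_isPoint A x hx).le, fun v => le_trans ?_ (hA v)⟩
  refine card_le_card_of_injOn (fun x => x.2.1) ?_ ?_
  · rintro ⟨w, a, b⟩ hx
    simp only [pointTimeline, mem_coe, mem_filter, mem_univ, true_and] at hx
    obtain ⟨⟨-, ha⟩, rfl⟩ := hx
    exact ha
  · rintro ⟨w, a, b⟩ hx ⟨w', a', b'⟩ hy (rfl : a = a')
    simp only [pointTimeline, mem_coe, mem_filter, mem_univ, true_and] at hx hy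
    obtain ⟨⟨rfl, -⟩, rfl⟩ := hx
    obtain ⟨⟨rfl, -⟩, rfl⟩ := hy
    rfl

lemma covers_pointTimeline {G : SimpleGraph V} {A : V → Finset (Fin τ)}
    (hA : ∀ u v, G.Adj u v → A u ∪ A v = univ) : covers (fun _ => G) (pointTimeline A) := by
  intro t u v huv
  rcases mem_union.1 (hA u v huv ▸ mem_univ t) with h | h
  · exact ⟨(u, t, t), by simp [pointTimeline, h], Or.inl rfl, le_rfl, le_rfl⟩
  · exact ⟨(v, t, t), by simp [pointTimeline, h], Or.inr rfl, le_rfl, le_rfl⟩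

end PointTimeline

lemma exists_card_le_union_eq_univ_iff_exists_disjoint {V α : Type*} [Fintype α]
    [DecidableEq α] (G : SimpleGraph V) (k : ℕ) :
    (∃ A : V → Finset α, (∀ v, #(A v) ≤ k) ∧ ∀ u v, G.Adj u v → A u ∪ A v = univ) ↔
      ∃ c : V → Finset α, (∀ v, #(c v) = Fintype.card α - k) ∧
        ∀ u v, G.Adj u v → Disjoint (c u) (c v) := by
  constructor
  · rintro ⟨A, hcard, hcov⟩
    have hcompl : ∀ v, Fintype.card α - k ≤ #(A v)ᶜ := fun v => by
      rw [card_compl]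
      exact Nat.sub_le_sub_left (hcard v) _
    choose c hcA hc using fun v => exists_subset_card_eq (hcompl v)
    refine ⟨c, hc, fun u v huv => Disjoint.mono (hcA u) (hcA v) ?_⟩
    rw [disjoint_iff, ← compl_sup, sup_eq_union, hcov u v huv, compl_univ, bot_eq_empty]
  · rintro ⟨c, hcard, hdisj⟩
    refine ⟨fun v => (c v)ᶜ, fun v => ?_, fun u v huv => ?_⟩
    · rw [card_compl, hcard]
      omega
    · rw [← compl_inter, disjoint_iff_inter_eq_empty.1 (hdisj u v huv), compl_empty]

theorem stmt1_general {V : Type*} [Fintype V] [DecidableEq V] (G : SimpleGraph V)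
    (τ k : ℕ) :
    (∃ T : Finset (V × Fin τ × Fin τ), isTimeline k T ∧
      (∀ x ∈ T, x.2.1 = x.2.2) ∧ covers (fun _ => G) T) ↔
    (∃ c : V → Finset (Fin τ), (∀ v, (c v).card = τ - k) ∧
      ∀ u v, G.Adj u v → Disjoint (c u) (c v)) := by
  have hcolor := exists_card_le_union_eq_univ_iff_exists_disjoint (α := Fin τ) G k
  rw [Fintype.card_fin] at hcolor
  rw [← hcolor]
  constructor
  · rintro ⟨T, hT, hpoint, hcov⟩
    exact ⟨activeTimes T, card_activeTimes_le hT, fun u v => union_activeTimes_eq_univ hpoint hcov⟩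
  · rintro ⟨A, hcard, hcov⟩
    exact ⟨pointTimeline A, isTimeline_pointTimeline hcard, pointTimeline_isPoint A,
      covers_pointTimeline hcov⟩

theorem stmt1 {V : Type*} [Fintype V] [DecidableEq V] (G : SimpleGraph V)
    (τ k : ℕ) (hk : 1 ≤ k) (hτ : k ≤ τ) :
    (∃ T : Finset (V × Fin τ × Fin τ), isTimeline k T ∧
      (∀ x ∈ T, x.2.1 = x.2.2) ∧ covers (fun _ => G) T) ↔
    (∃ c : V → Finset (Fin τ), (∀ v, (c v).card = τ - k) ∧
      ∀ u v, G.Adj u v → Disjoint (c u) (c v)) :=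
  stmt1_general G τ k
end

section
/- Let G = (V, E) be a finite graph and s ∈ ℕ. Consider the temporal graph G with two layers E_1 = E_2 = E. Then G has an odd cycle transversal X ⊆ V with |X| ≤ s (i.e., G − X is bipartite) if and only if G admits a 1-activity timeline T covering it with Σ_{(v,a,b)∈T} (b − a) ≤ s. -/
/-!
From an odd cycle transversal `X` and a proper 2-colouring of `G - X`, make every vertex of `X`
active at both time steps (cost 1 each) and every other vertex active at the single time step
given by its colour (cost 0); an edge between the colour classes is then covered at each time.
Conversely, a vertex whose interval is a single time step is active at exactly one time, so
colouring by that time is proper on the remaining graph, because each edge must be covered at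
both times while each vertex has at most one interval; the other vertices each cost at least 1.
-/

open Finset

section Timeline

variable {V : Type*} {τ : ℕ}

def activeAt (T : Finset (V × Fin τ × Fin τ)) (v : V) (t : Fin τ) : Prop :=
  ∃ x ∈ T, x.1 = v ∧ x.2.1 ≤ t ∧ t ≤ x.2.2

theorem covers_iff_forall_activeAt {E : Fin τ → SimpleGraph V} {T : Finset (V × Fin τ × Fin τ)} :
    covers E T ↔ ∀ t u v, (E t).Adj u v → activeAt T u t ∨ activeAt T v t := by
  refine forall₃_congr fun t u v => imp_congr_right fun _ => ⟨?_, ?_⟩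
  · rintro ⟨x, hx, hu | hv, h⟩
    exacts [Or.inl ⟨x, hx, hu, h⟩, Or.inr ⟨x, hx, hv, h⟩]
  · rintro (⟨x, hx, hu, h⟩ | ⟨x, hx, hv, h⟩)
    exacts [⟨x, hx, Or.inl hu, h⟩, ⟨x, hx, Or.inr hv, h⟩]

def graphTimeline [Fintype V] (g : V → Fin τ × Fin τ) : Finset (V × Fin τ × Fin τ) :=
  univ.map ⟨fun v => (v, g v), fun _ _ h => congrArg Prod.fst h⟩

section Graph

variable [Fintype V] (g : V → Fin τ × Fin τ)

theorem mem_graphTimeline {x : V × Fin τ × Fin τ} : x ∈ graphTimeline g ↔ x.2 = g x.1 := by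
  simp only [graphTimeline, mem_map, mem_univ, true_and]
  exact ⟨fun ⟨v, hv⟩ => hv ▸ rfl, fun h => ⟨x.1, Prod.ext rfl h.symm⟩⟩

theorem isTimeline_graphTimeline [DecidableEq V] (hg : ∀ v, (g v).1 ≤ (g v).2) :
    isTimeline 1 (graphTimeline g) := by
  refine ⟨fun x hx => (mem_graphTimeline g).1 hx ▸ hg x.1, fun v => card_le_one.2 ?_⟩
  intro x hx y hy
  simp only [mem_filter, mem_graphTimeline] at hx hy
  exact Prod.ext (hx.2.trans hy.2.symm) (by rw [hx.1, hy.1, hx.2, hy.2])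

theorem activeAt_graphTimeline {v : V} {t : Fin τ} :
    activeAt (graphTimeline g) v t ↔ (g v).1 ≤ t ∧ t ≤ (g v).2 := by
  simp only [activeAt, mem_graphTimeline]
  exact ⟨fun ⟨x, hx, hxv, h⟩ => hxv ▸ hx ▸ h, fun h => ⟨(v, g v), rfl, rfl, h⟩⟩

theorem sum_graphTimeline {M : Type*} [AddCommMonoid M] (F : V × Fin τ × Fin τ → M) :
    ∑ x ∈ graphTimeline g, F x = ∑ v, F (v, g v) :=
  sum_map _ _ _

end Graph

variable [DecidableEq V]

def nontrivialVertices (T : Finset (V × Fin τ × Fin τ)) : Finset V :=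
  (T.filter fun x => x.2.1 ≠ x.2.2).image Prod.fst

variable {T : Finset (V × Fin τ × Fin τ)}

theorem card_nontrivialVertices_le (hT : ∀ x ∈ T, x.2.1 ≤ x.2.2) :
    #(nontrivialVertices T) ≤ ∑ x ∈ T, (x.2.2.val - x.2.1.val) :=
  calc #(nontrivialVertices T) ≤ #(T.filter fun x => x.2.1 ≠ x.2.2) := card_image_le
    _ = ∑ x ∈ T.filter (fun x => x.2.1 ≠ x.2.2), 1 := card_eq_sum_ones _
    _ ≤ ∑ x ∈ T.filter (fun x => x.2.1 ≠ x.2.2), (x.2.2.val - x.2.1.val) := by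
      refine sum_le_sum fun x hx => ?_
      obtain ⟨hxT, hne⟩ := mem_filter.1 hx
      have := Fin.le_def.1 (hT x hxT)
      have := Fin.val_ne_of_ne hne
      omega
    _ ≤ ∑ x ∈ T, (x.2.2.val - x.2.1.val) := sum_le_sum_of_subset (filter_subset _ _)

theorem activeAt_unique (hT : isTimeline 1 T) {v : V} (hv : v ∉ nontrivialVertices T)
    {t t' : Fin τ} (ht : activeAt T v t) (ht' : activeAt T v t') : t = t' := by
  obtain ⟨x, hx, rfl, hxt, htx⟩ := ht
  obtain ⟨y, hy, hyx, hyt, hty⟩ := ht'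
  have hxy : x = y := card_le_one.1 (hT.2 x.1) x (mem_filter.2 ⟨hx, rfl⟩) y (mem_filter.2 ⟨hy, hyx⟩)
  subst hxy
  have hpoint : x.2.1 = x.2.2 := by
    by_contra hne
    exact hv (mem_image_of_mem _ (mem_filter.2 ⟨hx, hne⟩))
  exact le_antisymm (htx.trans (hpoint ▸ hyt)) (hty.trans (hpoint ▸ hxt))

end Timeline

section TwoLayers

variable {V : Type*} [DecidableEq V]

theorem not_activeAt_zero_iff_of_adj {G : SimpleGraph V} {T : Finset (V × Fin 2 × Fin 2)}
    (hT : isTimeline 1 T) (hcov : covers (fun _ => G) T) {u v : V}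
    (hu : u ∉ nontrivialVertices T) (hv : v ∉ nontrivialVertices T) (huv : G.Adj u v) :
    ¬(activeAt T u 0 ↔ activeAt T v 0) := by
  have h0 := covers_iff_forall_activeAt.1 hcov 0 u v huv
  have h1 := covers_iff_forall_activeAt.1 hcov 1 u v huv
  have hu01 : ¬(activeAt T u 0 ∧ activeAt T u 1) := fun h =>
    zero_ne_one (activeAt_unique hT hu h.1 h.2)
  have hv01 : ¬(activeAt T v 0 ∧ activeAt T v 1) := fun h =>
    zero_ne_one (activeAt_unique hT hv h.1 h.2)
  tauto

def oddCycleInterval (X : Finset V) (f : V → Bool) (v : V) : Fin 2 × Fin 2 :=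
  if v ∈ X then (0, 1) else if f v then (0, 0) else (1, 1)

variable (X : Finset V) (f : V → Bool)

theorem oddCycleInterval_fst_le_snd (v : V) :
    (oddCycleInterval X f v).1 ≤ (oddCycleInterval X f v).2 := by
  unfold oddCycleInterval
  split_ifs <;> decide

theorem sum_length_oddCycleInterval [Fintype V] :
    ∑ v, ((oddCycleInterval X f v).2.val - (oddCycleInterval X f v).1.val) = #X := by
  have hlen : ∀ v, (oddCycleInterval X f v).2.val - (oddCycleInterval X f v).1.val =
      if v ∈ X then 1 else 0 := by
    intro v
    unfold oddCycleInterval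
    split_ifs <;> rfl
  simp only [hlen, sum_ite_mem, univ_inter, card_eq_sum_ones]

theorem oddCycleInterval_covers {u v : V} (hne : u ∉ X → v ∉ X → f u ≠ f v) (t : Fin 2) :
    ((oddCycleInterval X f u).1 ≤ t ∧ t ≤ (oddCycleInterval X f u).2) ∨
      ((oddCycleInterval X f v).1 ≤ t ∧ t ≤ (oddCycleInterval X f v).2) := by
  unfold oddCycleInterval
  by_cases hu : u ∈ X
  · simp only [hu, if_true]
    left
    fin_cases t <;> decide
  by_cases hv : v ∈ X
  · simp only [hv, if_true]
    right
    fin_cases t <;> decide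
  have hf := hne hu hv
  simp only [hu, hv, if_false]
  revert hf
  cases f u <;> cases f v <;> fin_cases t <;> decide

end TwoLayers

theorem stmt2 {V : Type*} [Fintype V] [DecidableEq V] (G : SimpleGraph V) (s : ℕ) :
    (∃ X : Finset V, X.card ≤ s ∧
      ∃ f : V → Bool, ∀ u v, G.Adj u v → u ∉ X → v ∉ X → f u ≠ f v) ↔
    (∃ T : Finset (V × Fin 2 × Fin 2), isTimeline 1 T ∧
      covers (fun _ : Fin 2 => G) T ∧
      ∑ x ∈ T, (x.2.2.val - x.2.1.val) ≤ s) := by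
  constructor
  · rintro ⟨X, hX, f, hf⟩
    refine ⟨graphTimeline (oddCycleInterval X f),
      isTimeline_graphTimeline _ (oddCycleInterval_fst_le_snd X f),
      covers_iff_forall_activeAt.2 fun t u v huv => ?_, ?_⟩
    · simp only [activeAt_graphTimeline]
      exact oddCycleInterval_covers X f (hf u v huv) t
    · rwa [sum_graphTimeline, sum_length_oddCycleInterval]
  · rintro ⟨T, hT, hcov, hsum⟩
    classical
    refine ⟨nontrivialVertices T, (card_nontrivialVertices_le hT.1).trans hsum,
      fun v => decide (activeAt T v 0), fun u v huv hu hv h => ?_⟩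
    exact not_activeAt_zero_iff_of_adj hT hcov hu hv huv (by simpa using h)
end
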